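/- The follow automaton A_f(α), defined as the quotient of the position automaton A_pos(α) by the follow relation ≡_f, accepts exactly L(α). -/

import Mathlib

/-!
Marking every letter occurrence of `α` with its position makes the marked language local: a
nonempty word lies in it iff it begins with a first letter, ends with a last letter and each of
its factors of length two is a pair of consecutive letters of some word of the language. Locality
holds for `∅`, `ε` and single letters and is preserved by Kleene star and by sums and products of
languages over disjoint alphabets, so it follows by induction on `α`. A position determines its
letter, hence the runs of `A_pos(α)` are exactly such chains of positions, and `A_pos(α)` accepts
`L(α)`. Related states of `≡_f` have the same successors and the same finality, so `≡_f` is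
right-invariant and the quotient `A_f(α)` accepts the same language.
-/

open RegularExpression
open scoped Classical

variable {σ : Type*}

/-- Alphabetic size: number of letter occurrences. -/
def alph : RegularExpression σ → ℕ
  | zero => 0
  | epsilon => 0
  | char _ => 1
  | plus P Q => alph P + alph Q
  | comp P Q => alph P + alph Q
  | RegularExpression.star P => alph P

/-- Mark every letter occurrence with its position; `n` is the number of
positions used so far (positions are `n+1, n+2, …`). -/
def mark : RegularExpression σ → ℕ → RegularExpression (σ × ℕ)
  | zero, _ => zero
  | epsilon, _ => epsilon
  | char a, n => char (a, n + 1)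
  | plus P Q, n => plus (mark P n) (mark Q (n + alph P))
  | comp P Q, n => comp (mark P n) (mark Q (n + alph P))
  | RegularExpression.star P, n => RegularExpression.star (mark P n)

/-- The marked version `ᾱ` of `α`, with positions `1, …, |α|_Σ`. -/
def marked (α : RegularExpression σ) : RegularExpression (σ × ℕ) :=
  mark α 0

/-- `first(α)`: positions that can begin a word of `L(ᾱ)`. -/
def first (α : RegularExpression σ) : Set ℕ :=
  {j | ∃ a w, ((a, j) :: w) ∈ (marked α).matches'}

/-- `last(α)`: positions that can end a word of `L(ᾱ)`. -/
def last (α : RegularExpression σ) : Set ℕ :=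
  {j | ∃ a w, (w ++ [(a, j)]) ∈ (marked α).matches'}

/-- `follow(α,i)`: positions that can follow position `i` in a word of `L(ᾱ)`,
with `follow(α,0) = first(α)`. -/
def follow (α : RegularExpression σ) (i : ℕ) : Set ℕ :=
  if i = 0 then first α
  else {j | ∃ a b u v, (u ++ (a, i) :: (b, j) :: v) ∈ (marked α).matches'}

/-- The letter occurring at position `j` (1-indexed) of `α`, if any. -/
def letterAt : RegularExpression σ → ℕ → Option σ
  | zero, _ => none
  | epsilon, _ => none
  | char a, j => if j = 1 then some a else none
  | plus P Q, j => if j ≤ alph P then letterAt P j else letterAt Q (j - alph P)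
  | comp P Q, j => if j ≤ alph P then letterAt P j else letterAt Q (j - alph P)
  | RegularExpression.star P, j => letterAt P j

/-- `Pos₀(α) = {0, 1, …, |α|_Σ}` as a type. -/
def Pos0 (α : RegularExpression σ) : Type _ := {i : ℕ // i ≤ alph α}

/-- The final-state set: `last(α) ∪ {0}` if `ε ∈ L(α)`, else `last(α)`. -/

noncomputable def lastZero (α : RegularExpression σ) : Set ℕ :=
  if [] ∈ α.matches' then last α ∪ {0} else last α

/-- The Glushkov position automaton of `α`. -/
noncomputable def posNFA (α : RegularExpression σ) : NFA σ (Pos0 α) where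
  step := fun i a => {j | j.1 ∈ follow α i.1 ∧ letterAt α j.1 = some a}
  start := {i | i.1 = 0}
  accept := {i | i.1 ∈ lastZero α}

/-- `E` is a right-invariant equivalence relation w.r.t. the NFA `M`:
it is an equivalence, it refines the partition `{Q∖F, F}`, and related
states have the same sets of `E`-classes of successors. -/
def RightInvariant {A Q : Type*} (M : NFA A Q) (E : Q → Q → Prop) : Prop :=
  Equivalence E ∧
  (∀ p q, E p q → (p ∈ M.accept ↔ q ∈ M.accept)) ∧
  (∀ p q a, E p q →
    (∀ r ∈ M.step p a, ∃ s ∈ M.step q a, E r s) ∧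
    (∀ s ∈ M.step q a, ∃ r ∈ M.step p a, E r s))

/-- The quotient of an NFA by an equivalence relation on its states. -/
def quotNFA {A Q : Type*} (M : NFA A Q) (s : Setoid Q) : NFA A (Quotient s) where
  step := fun x a => {y | ∃ p q, x = Quotient.mk s p ∧ y = Quotient.mk s q ∧ q ∈ M.step p a}
  start := {x | ∃ p ∈ M.start, x = Quotient.mk s p}
  accept := {x | ∃ p ∈ M.accept, x = Quotient.mk s p}

/-- The follow relation `≡_f` on `Pos₀(α)`, as a setoid. -/
noncomputable def followSetoid (α : RegularExpression σ) : Setoid (Pos0 α) :=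
  ⟨fun x y => (x.1 ∈ lastZero α ↔ y.1 ∈ lastZero α) ∧ follow α x.1 = follow α y.1,
    ⟨fun _ => ⟨Iff.rfl, rfl⟩, fun h => ⟨h.1.symm, h.2.symm⟩,
      fun h g => ⟨h.1.trans g.1, h.2.trans g.2⟩⟩⟩

/-- The follow automaton `A_f(α)`, the quotient of the position automaton by `≡_f`. -/
noncomputable def followNFA (α : RegularExpression σ) : NFA σ (Quotient (followSetoid α)) :=
  quotNFA (posNFA α) (followSetoid α)

open Computability

theorem List.IsChain.append_singleton {α : Type*} {R : α → α → Prop} {l : List α} {z b : α}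
    (hl : l.IsChain R) (hz : z ∈ l.getLast?) (hzb : R z b) : (l ++ [b]).IsChain R :=
  hl.append (.singleton b) fun _ hx _ hy =>
    Option.mem_unique hz hx ▸ Option.mem_some_iff.mp hy ▸ hzb

namespace Language

variable {Γ : Type*} {L L₁ L₂ : Language Γ} {a b : Γ}

def letters (L : Language Γ) : Set Γ := {a | ∃ w ∈ L, a ∈ w}

def firstLetters (L : Language Γ) : Set Γ := {a | ∃ w, a :: w ∈ L}

def lastLetters (L : Language Γ) : Set Γ := {a | ∃ w, w ++ [a] ∈ L}

def Follows (L : Language Γ) (a b : Γ) : Prop := ∃ u v, u ++ a :: b :: v ∈ L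

def IsLocal (L : Language Γ) : Prop :=
  ∀ a w, a ∈ L.firstLetters → (∀ z ∈ (a :: w).getLast?, z ∈ L.lastLetters) →
    (a :: w).IsChain L.Follows → a :: w ∈ L

theorem firstLetters_subset_letters : L.firstLetters ⊆ L.letters :=
  fun _ ⟨_, hw⟩ => ⟨_, hw, List.mem_cons_self⟩

theorem lastLetters_subset_letters : L.lastLetters ⊆ L.letters :=
  fun _ ⟨w, hw⟩ => ⟨_, hw, by simp⟩

theorem Follows.left_mem_letters (h : L.Follows a b) : a ∈ L.letters :=
  let ⟨_, _, hw⟩ := h; ⟨_, hw, by simp⟩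

theorem Follows.right_mem_letters (h : L.Follows a b) : b ∈ L.letters :=
  let ⟨_, _, hw⟩ := h; ⟨_, hw, by simp⟩

theorem isChain_follows_of_mem {w : List Γ} (hw : w ∈ L) : w.IsChain L.Follows :=
  List.isChain_iff_forall_rel_of_append_cons_cons.mpr fun _ _ u v h => ⟨u, v, h ▸ hw⟩

theorem mem_lastLetters_of_mem {w : List Γ} (hw : w ∈ L) (ha : a ∈ w.getLast?) :
    a ∈ L.lastLetters :=
  let ⟨u, hu⟩ := List.getLast?_eq_some_iff.mp ha; ⟨u, hu ▸ hw⟩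

theorem letters_add : (L₁ + L₂).letters = L₁.letters ∪ L₂.letters := by
  ext; simp only [letters, Set.mem_ofPred_eq, Set.mem_union, mem_add, or_and_right, exists_or]

theorem firstLetters_add : (L₁ + L₂).firstLetters = L₁.firstLetters ∪ L₂.firstLetters := by
  ext; simp only [firstLetters, Set.mem_ofPred_eq, Set.mem_union, mem_add, exists_or]

theorem lastLetters_add : (L₁ + L₂).lastLetters = L₁.lastLetters ∪ L₂.lastLetters := by
  ext; simp only [lastLetters, Set.mem_ofPred_eq, Set.mem_union, mem_add, exists_or]

theorem follows_add : (L₁ + L₂).Follows a b ↔ L₁.Follows a b ∨ L₂.Follows a b := by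
  simp only [Follows, mem_add, exists_or]

theorem letters_mul_subset : (L₁ * L₂).letters ⊆ L₁.letters ∪ L₂.letters := by
  rintro a ⟨_, ⟨u, hu, v, hv, rfl⟩, ha⟩
  rcases List.mem_append.mp ha with ha | ha
  exacts [Or.inl ⟨u, hu, ha⟩, Or.inr ⟨v, hv, ha⟩]

theorem firstLetters_mul_subset :
    (L₁ * L₂).firstLetters ⊆ L₁.firstLetters ∪ {a | [] ∈ L₁ ∧ a ∈ L₂.firstLetters} := by
  rintro a ⟨w, hw⟩
  obtain ⟨u, hu, v, hv, huv⟩ := mem_mul.mp hw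
  rcases u with _ | ⟨c, u⟩
  · exact Or.inr ⟨hu, w, by rwa [← huv]⟩
  · obtain ⟨rfl, -⟩ := List.cons_eq_cons.mp huv
    exact Or.inl ⟨u, hu⟩

theorem lastLetters_mul_subset :
    (L₁ * L₂).lastLetters ⊆ L₂.lastLetters ∪ {a | [] ∈ L₂ ∧ a ∈ L₁.lastLetters} := by
  rintro a ⟨w, hw⟩
  obtain ⟨u, hu, v, hv, huv⟩ := mem_mul.mp hw
  rcases v.eq_nil_or_concat' with rfl | ⟨v, c, rfl⟩
  · exact Or.inr ⟨hv, w, by rwa [← huv, List.append_nil]⟩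
  · rw [← List.append_assoc] at huv
    obtain rfl : c = a := List.singleton_inj.mp (List.append_inj' huv rfl).2
    exact Or.inl ⟨v, hv⟩

theorem Follows.of_mul (h : (L₁ * L₂).Follows a b) :
    L₁.Follows a b ∨ L₂.Follows a b ∨ (a ∈ L₁.lastLetters ∧ b ∈ L₂.firstLetters) := by
  obtain ⟨u, v, huv⟩ := h
  obtain ⟨x, hx, y, hy, hxy⟩ := mem_mul.mp huv
  rcases List.append_eq_append_iff.mp hxy with ⟨t, rfl, rfl⟩ | ⟨t, rfl, ht⟩
  · exact Or.inr (Or.inl ⟨t, v, hy⟩)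
  · rcases t with _ | ⟨c, _ | ⟨d, t⟩⟩
    · exact Or.inr (Or.inl ⟨[], v, by simpa [ht] using hy⟩)
    · obtain ⟨rfl, rfl⟩ := List.cons_eq_cons.mp ht
      exact Or.inr (Or.inr ⟨⟨u, hx⟩, v, hy⟩)
    · simp only [List.cons_append, List.cons.injEq] at ht
      obtain ⟨rfl, rfl, rfl⟩ := ht
      exact Or.inl ⟨u, t, hx⟩

theorem firstLetters_pow_subset (n : ℕ) : (L ^ n).firstLetters ⊆ L.firstLetters := by
  induction n with
  | zero => rintro a ⟨w, hw⟩; cases hw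
  | succ n ih =>
    rw [pow_succ]
    rintro a ha
    rcases firstLetters_mul_subset ha with ha | ⟨-, ha⟩
    exacts [ih ha, ha]

theorem lastLetters_pow_subset (n : ℕ) : (L ^ n).lastLetters ⊆ L.lastLetters := by
  induction n with
  | zero => rintro a ⟨w, hw⟩; simp at hw
  | succ n ih =>
    rw [pow_succ]
    rintro a ha
    rcases lastLetters_mul_subset ha with ha | ⟨-, ha⟩
    exacts [ha, ih ha]

theorem Follows.of_pow {n : ℕ} (h : (L ^ n).Follows a b) :
    L.Follows a b ∨ (a ∈ L.lastLetters ∧ b ∈ L.firstLetters) := by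
  induction n with
  | zero => obtain ⟨u, v, huv⟩ := h; simp at huv
  | succ n ih =>
    rw [pow_succ] at h
    rcases h.of_mul with h | h | ⟨ha, hb⟩
    exacts [ih h, Or.inl h, Or.inr ⟨lastLetters_pow_subset n ha, hb⟩]

theorem exists_mem_pow_of_mem_kstar {w : List Γ} (hw : w ∈ L∗) : ∃ n, w ∈ L ^ n := by
  rwa [kstar_eq_iSup_pow, mem_iSup] at hw

theorem letters_kstar_subset : L∗.letters ⊆ L.letters := by
  rintro a ⟨w, hw, ha⟩
  obtain ⟨S, rfl, hS⟩ := mem_kstar.mp hw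
  obtain ⟨l, hl, ha⟩ := List.mem_flatten.mp ha
  exact ⟨l, hS l hl, ha⟩

theorem firstLetters_kstar_subset : L∗.firstLetters ⊆ L.firstLetters := fun _ ⟨_, hw⟩ =>
  let ⟨n, hn⟩ := exists_mem_pow_of_mem_kstar hw; firstLetters_pow_subset n ⟨_, hn⟩

theorem lastLetters_kstar_subset : L∗.lastLetters ⊆ L.lastLetters := fun _ ⟨_, hw⟩ =>
  let ⟨n, hn⟩ := exists_mem_pow_of_mem_kstar hw; lastLetters_pow_subset n ⟨_, hn⟩

theorem Follows.of_kstar (h : L∗.Follows a b) :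
    L.Follows a b ∨ (a ∈ L.lastLetters ∧ b ∈ L.firstLetters) :=
  let ⟨_, _, hw⟩ := h; let ⟨_, hn⟩ := exists_mem_pow_of_mem_kstar hw; Follows.of_pow ⟨_, _, hn⟩

theorem isLocal_zero : (0 : Language Γ).IsLocal :=
  fun _ _ ⟨_, h⟩ _ _ => absurd h (notMem_zero _)

theorem isLocal_one : (1 : Language Γ).IsLocal :=
  fun _ _ ⟨_, h⟩ _ _ => by cases h

theorem isLocal_singleton (c : Γ) : ({[c]} : Language Γ).IsLocal := by
  rintro a w ⟨_, h⟩ - hchain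
  obtain ⟨rfl, -⟩ := List.cons_eq_cons.mp h
  rcases w with _ | ⟨b, w⟩
  · rfl
  · obtain ⟨u, v, huv⟩ := hchain.rel_head? rfl
    have := congrArg List.length huv
    simp at this; omega

theorem IsLocal.mem_of_isChain (hL : L.IsLocal) {R : Γ → Γ → Prop}
    (hR : ∀ a b, a ∈ L.letters → R a b → L.Follows a b) {a : Γ} {w : List Γ}
    (ha : a ∈ L.firstLetters) (hlast : ∀ z ∈ (a :: w).getLast?, z ∈ L.letters → z ∈ L.lastLetters)
    (hchain : (a :: w).IsChain R) : a :: w ∈ L := by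
  have hmem : ∀ x ∈ a :: w, x ∈ L.letters :=
    hchain.induction _ _ (fun x y hxy hx => (hR x y hx hxy).right_mem_letters)
      (fun _ => firstLetters_subset_letters ha)
  refine hL a w ha (fun z hz => hlast z hz (hmem z (List.mem_of_getLast? hz))) ?_
  exact hchain.imp_of_mem_imp fun x y hx _ hxy => hR x y (hmem x hx) hxy

theorem IsLocal.mem_left_of_isChain_add (h₁ : L₁.IsLocal) (hd : Disjoint L₁.letters L₂.letters)
    {a : Γ} {w : List Γ} (ha : a ∈ L₁.firstLetters)
    (hlast : ∀ z ∈ (a :: w).getLast?, z ∈ (L₁ + L₂).lastLetters)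
    (hchain : (a :: w).IsChain (L₁ + L₂).Follows) : a :: w ∈ L₁ := by
  refine h₁.mem_of_isChain (fun x y hx hxy => ?_) ha (fun z hz hz₁ => ?_) hchain
  · exact (follows_add.mp hxy).resolve_right
      fun h => hd.notMem_of_mem_left hx h.left_mem_letters
  · rw [lastLetters_add] at hlast
    exact (hlast z hz).resolve_right
      fun h => hd.notMem_of_mem_left hz₁ (lastLetters_subset_letters h)

theorem IsLocal.add (h₁ : L₁.IsLocal) (h₂ : L₂.IsLocal) (hd : Disjoint L₁.letters L₂.letters) :
    (L₁ + L₂).IsLocal := by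
  intro a w ha hlast hchain
  rcases (firstLetters_add ▸ ha : a ∈ L₁.firstLetters ∪ L₂.firstLetters) with ha | ha
  · exact Or.inl (h₁.mem_left_of_isChain_add hd ha hlast hchain)
  · rw [add_comm] at hlast hchain ⊢
    exact Or.inl (h₂.mem_left_of_isChain_add hd.symm ha hlast hchain)

theorem IsLocal.cons_mem (hL : L.IsLocal) {a z : Γ} {p : List Γ} (ha : a ∈ L.firstLetters)
    (hp : (a :: p).IsChain L.Follows) (hz : z ∈ (a :: p).getLast?) (hzl : z ∈ L.lastLetters) :
    a :: p ∈ L :=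
  hL a p ha (fun _ hy => Option.mem_unique hz hy ▸ hzl) hp

theorem IsLocal.mem_right_of_isChain_mul (h₂ : L₂.IsLocal) (hd : Disjoint L₁.letters L₂.letters)
    {b : Γ} {w : List Γ} (hb : b ∈ L₂.firstLetters)
    (hlast : ∀ z ∈ (b :: w).getLast?, z ∈ (L₁ * L₂).lastLetters)
    (hchain : (b :: w).IsChain (L₁ * L₂).Follows) : b :: w ∈ L₂ := by
  refine h₂.mem_of_isChain (fun x y hx hxy => ?_) hb (fun z hz hz₂ => ?_) hchain
  · rcases hxy.of_mul with h | h | ⟨h, -⟩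
    · exact absurd h.left_mem_letters (hd.notMem_of_mem_right hx)
    · exact h
    · exact absurd (lastLetters_subset_letters h) (hd.notMem_of_mem_right hx)
  · rcases lastLetters_mul_subset (hlast z hz) with h | ⟨-, h⟩
    · exact h
    · exact absurd (lastLetters_subset_letters h) (hd.notMem_of_mem_right hz₂)

/-- The block `a :: p` read so far is an `L₁`-chain ending in `z`; it grows letter by letter until
the chain passes from a last letter of `L₁` to a first letter of `L₂`. -/
theorem IsLocal.cons_append_mem_mul (h₁ : L₁.IsLocal) (h₂ : L₂.IsLocal)
    (hd : Disjoint L₁.letters L₂.letters) {a : Γ} (ha : a ∈ L₁.firstLetters) (w : List Γ) :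
    ∀ {p : List Γ} {z : Γ}, (a :: p).IsChain L₁.Follows → z ∈ (a :: p).getLast? →
      (a :: p ++ w).IsChain (L₁ * L₂).Follows →
      (∀ y ∈ (a :: p ++ w).getLast?, y ∈ (L₁ * L₂).lastLetters) → a :: p ++ w ∈ L₁ * L₂ := by
  intro p z hp hz hchain hlast
  have hz₁ : z ∈ L₁.letters := hp.induction _ _ (fun _ _ h _ => h.right_mem_letters)
    (fun _ => firstLetters_subset_letters ha) z (List.mem_of_getLast? hz)
  induction w generalizing p z with
  | nil =>
    rw [List.append_nil] at hlast
    rcases lastLetters_mul_subset (hlast z hz) with h | ⟨hnil, h⟩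
    · exact absurd (lastLetters_subset_letters h) (hd.notMem_of_mem_left hz₁)
    · exact append_mem_mul (h₁.cons_mem ha hp hz h) hnil
  | cons b w ih =>
    have hzb : (L₁ * L₂).Follows z b := (List.isChain_append.mp hchain).2.2 z hz b rfl
    rcases hzb.of_mul with h | h | ⟨hzl, hb⟩
    · simpa using ih (hp.append_singleton hz h) (List.getLast?_concat (l := a :: p))
        (by simpa using hchain) (by simpa using hlast) h.right_mem_letters
    · exact absurd h.left_mem_letters (hd.notMem_of_mem_left hz₁)
    · exact append_mem_mul (h₁.cons_mem ha hp hz hzl)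
        (h₂.mem_right_of_isChain_mul hd hb (fun y hy => hlast y (by
          rwa [List.getLast?_append_of_ne_nil _ (List.cons_ne_nil b w)])) hchain.right_of_append)

theorem IsLocal.mul (h₁ : L₁.IsLocal) (h₂ : L₂.IsLocal) (hd : Disjoint L₁.letters L₂.letters) :
    (L₁ * L₂).IsLocal := by
  intro a w ha hlast hchain
  rcases firstLetters_mul_subset ha with ha | ⟨hnil, ha⟩
  · exact h₁.cons_append_mem_mul h₂ hd ha w (p := []) (.singleton a) rfl hchain hlast
  · exact append_mem_mul hnil (h₂.mem_right_of_isChain_mul hd ha hlast hchain)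

/-- As for products, except that at each passage from a last to a first letter of `L` the block is
closed and a new one starts. -/
theorem IsLocal.cons_append_mem_kstar (h : L.IsLocal) (w : List Γ) :
    ∀ {a : Γ} {p : List Γ} {z : Γ}, a ∈ L.firstLetters → (a :: p).IsChain L.Follows →
      z ∈ (a :: p).getLast? → (a :: p ++ w).IsChain L∗.Follows →
      (∀ y ∈ (a :: p ++ w).getLast?, y ∈ L.lastLetters) → a :: p ++ w ∈ L∗ := by
  induction w with
  | nil =>
    intro a p z ha hp hz _ hlast
    rw [List.append_nil] at hlast ⊢
    exact le_kstar (a := L) (h.cons_mem ha hp hz (hlast z hz))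
  | cons b w ih =>
    intro a p z ha hp hz hchain hlast
    rcases ((List.isChain_append.mp hchain).2.2 z hz b rfl).of_kstar with h | ⟨hzl, hb⟩
    · simpa using ih ha (hp.append_singleton hz h) (List.getLast?_concat (l := a :: p))
        (by simpa using hchain) (by simpa using hlast)
    · exact mul_kstar_le_kstar (a := L) (append_mem_mul (h.cons_mem ha hp hz hzl)
        (ih (p := []) hb (.singleton b) rfl hchain.right_of_append fun y hy => hlast y (by
          rwa [List.getLast?_append_of_ne_nil _ (List.cons_ne_nil b w)])))

theorem IsLocal.kstar (h : L.IsLocal) : L∗.IsLocal := fun a w ha hlast hchain =>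
  h.cons_append_mem_kstar w (p := []) (firstLetters_kstar_subset ha) (.singleton a) rfl hchain
    fun y hy => lastLetters_kstar_subset (hlast y hy)

end Language

namespace NFA

variable {A Q : Type*} (M : NFA A Q)

theorem mem_acceptsFrom_iff_exists {S : Set Q} {x : List A} :
    x ∈ M.acceptsFrom S ↔ ∃ s ∈ S, x ∈ M.acceptsFrom {s} := by
  simp only [mem_acceptsFrom, mem_evalFrom_iff_exists (S := S)]
  exact ⟨fun ⟨t, ht, s, hs, h⟩ => ⟨s, hs, t, ht, h⟩, fun ⟨s, hs, t, ht, h⟩ => ⟨t, ht, s, hs, h⟩⟩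

theorem cons_mem_acceptsFrom_singleton {s : Q} {a : A} {x : List A} :
    a :: x ∈ M.acceptsFrom {s} ↔ ∃ t ∈ M.step s a, x ∈ M.acceptsFrom {t} := by
  rw [cons_mem_acceptsFrom, stepSet_singleton, mem_acceptsFrom_iff_exists]

end NFA

section Quotient

variable {A Q : Type*} (M : NFA A Q) (s : Setoid Q)

theorem mem_acceptsFrom_quotNFA_iff (h : RightInvariant M s.r) (x : List A) (p : Q) :
    x ∈ (quotNFA M s).acceptsFrom {Quotient.mk s p} ↔ x ∈ M.acceptsFrom {p} := by
  induction x generalizing p with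
  | nil =>
    simp only [NFA.nil_mem_acceptsFrom, Set.mem_singleton_iff, exists_eq_left]
    exact ⟨fun ⟨q, hq, e⟩ => (h.2.1 p q (Quotient.exact e)).mpr hq, fun hp => ⟨p, hp, rfl⟩⟩
  | cons a x ih =>
    rw [NFA.cons_mem_acceptsFrom_singleton, NFA.cons_mem_acceptsFrom_singleton]
    constructor
    · rintro ⟨_, ⟨p', q, e, rfl, hq⟩, hx⟩
      obtain ⟨r, hr, hrq⟩ := (h.2.2 p p' a (Quotient.exact e)).2 q hq
      exact ⟨r, hr, (ih r).mp (Quotient.sound hrq ▸ hx)⟩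
    · rintro ⟨r, hr, hx⟩
      exact ⟨_, ⟨p, r, rfl, rfl, hr⟩, (ih r).mpr hx⟩

theorem quotNFA_accepts (h : RightInvariant M s.r) : (quotNFA M s).accepts = M.accepts := by
  ext x
  rw [NFA.accepts_eq_acceptsFrom_start, NFA.accepts_eq_acceptsFrom_start,
    NFA.mem_acceptsFrom_iff_exists, NFA.mem_acceptsFrom_iff_exists]
  constructor
  · rintro ⟨_, ⟨p, hp, rfl⟩, hx⟩
    exact ⟨p, hp, (mem_acceptsFrom_quotNFA_iff M s h x p).mp hx⟩
  · rintro ⟨p, hp, hx⟩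
    exact ⟨_, ⟨p, hp, rfl⟩, (mem_acceptsFrom_quotNFA_iff M s h x p).mpr hx⟩

end Quotient

theorem map_fst_mark (α : RegularExpression σ) (n : ℕ) : (mark α n).map Prod.fst = α := by
  induction α generalizing n with
  | zero | epsilon | char a => rfl
  | plus P Q ihP ihQ => exact congrArg₂ plus (ihP n) (ihQ _)
  | comp P Q ihP ihQ => exact congrArg₂ comp (ihP n) (ihQ _)
  | star P ih => exact congrArg RegularExpression.star (ih n)

theorem matches'_eq_image_marked (α : RegularExpression σ) :
    α.matches' = List.map Prod.fst '' (marked α).matches' := by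
  conv_lhs => rw [← map_fst_mark α 0]
  exact matches'_map _ _

theorem letters_mark_subset (α : RegularExpression σ) (n : ℕ) :
    (mark α n).matches'.letters ⊆
      {p | n < p.2 ∧ p.2 ≤ n + alph α ∧ letterAt α (p.2 - n) = some p.1} := by
  induction α generalizing n with
  | zero => rintro p ⟨w, hw, -⟩; cases hw
  | epsilon => rintro p ⟨w, rfl, hp⟩; cases hp
  | char a =>
    rintro p ⟨w, rfl, hp⟩
    obtain rfl := List.mem_singleton.mp hp
    simp [alph, letterAt]
  | plus P Q ihP ihQ | comp P Q ihP ihQ =>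
    intro p hp
    replace hp : p ∈ (mark P n).matches'.letters ∪ (mark Q (n + alph P)).matches'.letters := by
      first
        | exact Language.letters_add.subset hp
        | exact Language.letters_mul_subset hp
    rcases hp with hp | hp
    · obtain ⟨h₁, h₂, h₃⟩ := ihP n hp
      refine ⟨h₁, by simp only [alph]; omega, ?_⟩
      rwa [letterAt, if_pos (by omega)]
    · obtain ⟨h₁, h₂, h₃⟩ := ihQ _ hp
      refine ⟨by omega, by simp only [alph]; omega, ?_⟩
      rwa [letterAt, if_neg (by omega), Nat.sub_sub]
  | star P ih => exact Language.letters_kstar_subset.trans (ih n)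

theorem disjoint_letters_mark (P Q : RegularExpression σ) (n : ℕ) :
    Disjoint (mark P n).matches'.letters (mark Q (n + alph P)).matches'.letters :=
  Set.disjoint_left.mpr fun p hP hQ => by
    have := (letters_mark_subset P n hP).2.1
    have := (letters_mark_subset Q _ hQ).1
    omega

theorem isLocal_mark (α : RegularExpression σ) (n : ℕ) : (mark α n).matches'.IsLocal := by
  induction α generalizing n with
  | zero => exact Language.isLocal_zero
  | epsilon => exact Language.isLocal_one
  | char a => exact Language.isLocal_singleton (a, n + 1)
  | plus P Q ihP ihQ => exact (ihP n).add (ihQ _) (disjoint_letters_mark P Q n)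
  | comp P Q ihP ihQ => exact (ihP n).mul (ihQ _) (disjoint_letters_mark P Q n)
  | star P ih => exact (ih n).kstar

section PositionAutomaton

open Language

variable {α : RegularExpression σ}

theorem letterAt_of_mem_letters_marked {p : σ × ℕ} (hp : p ∈ (marked α).matches'.letters) :
    0 < p.2 ∧ p.2 ≤ alph α ∧ letterAt α p.2 = some p.1 := by
  simpa using letters_mark_subset α 0 hp

theorem eq_of_mem_letters_marked {a b : σ} {j : ℕ} (ha : (a, j) ∈ (marked α).matches'.letters)
    (hb : letterAt α j = some b) : a = b :=
  Option.some_injective _ ((letterAt_of_mem_letters_marked ha).2.2.symm.trans hb)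

theorem mem_posNFA_step_zero_iff {i j : Pos0 α} {b : σ} (hi : i.1 = 0) :
    j ∈ (posNFA α).step i b ↔ (b, j.1) ∈ (marked α).matches'.firstLetters := by
  change j.1 ∈ follow α i.1 ∧ letterAt α j.1 = some b ↔ _
  rw [hi, follow, if_pos rfl]
  constructor
  · rintro ⟨⟨b', w, hw⟩, hb⟩
    obtain rfl := eq_of_mem_letters_marked (firstLetters_subset_letters ⟨w, hw⟩) hb
    exact ⟨w, hw⟩
  · rintro ⟨w, hw⟩
    exact ⟨⟨b, w, hw⟩, (letterAt_of_mem_letters_marked (firstLetters_subset_letters ⟨w, hw⟩)).2.2⟩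

theorem mem_posNFA_step_iff {i j : Pos0 α} {a b : σ} (hi : (a, i.1) ∈ (marked α).matches'.letters) :
    j ∈ (posNFA α).step i b ↔ (marked α).matches'.Follows (a, i.1) (b, j.1) := by
  change j.1 ∈ follow α i.1 ∧ letterAt α j.1 = some b ↔ _
  rw [follow, if_neg (letterAt_of_mem_letters_marked hi).1.ne']
  constructor
  · rintro ⟨⟨a', b', u, v, huv⟩, hb⟩
    obtain rfl := eq_of_mem_letters_marked (Follows.left_mem_letters ⟨u, v, huv⟩)
      (letterAt_of_mem_letters_marked hi).2.2
    obtain rfl := eq_of_mem_letters_marked (Follows.right_mem_letters ⟨u, v, huv⟩) hb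
    exact ⟨u, v, huv⟩
  · rintro ⟨u, v, huv⟩
    exact ⟨⟨a, b, u, v, huv⟩,
      (letterAt_of_mem_letters_marked (Follows.right_mem_letters ⟨u, v, huv⟩)).2.2⟩

theorem mem_posNFA_accept_iff {i : Pos0 α} {a : σ} (hi : (a, i.1) ∈ (marked α).matches'.letters) :
    i ∈ (posNFA α).accept ↔ (a, i.1) ∈ (marked α).matches'.lastLetters := by
  have hlast : i.1 ∈ lastZero α ↔ i.1 ∈ last α := by
    unfold lastZero
    split_ifs <;> simp [(letterAt_of_mem_letters_marked hi).1.ne']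
  refine hlast.trans ⟨fun ⟨a', w, hw⟩ => ?_, fun ⟨w, hw⟩ => ⟨a, w, hw⟩⟩
  obtain rfl := eq_of_mem_letters_marked (lastLetters_subset_letters ⟨w, hw⟩)
    (letterAt_of_mem_letters_marked hi).2.2
  exact ⟨w, hw⟩

theorem mem_posNFA_accept_zero_iff {i : Pos0 α} (hi : i.1 = 0) :
    i ∈ (posNFA α).accept ↔ [] ∈ α.matches' := by
  have hlast : 0 ∉ last α := fun ⟨_, w, hw⟩ =>
    (letterAt_of_mem_letters_marked (lastLetters_subset_letters ⟨w, hw⟩)).1.ne' rfl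
  change i.1 ∈ lastZero α ↔ _
  rw [hi, lastZero]
  split_ifs with h <;> simp [h, hlast]

theorem map_fst_mem_acceptsFrom_posNFA (x : List (σ × ℕ)) :
    ∀ {i : Pos0 α} {a : σ}, (a, i.1) ∈ (marked α).matches'.letters →
      ((a, i.1) :: x).IsChain (marked α).matches'.Follows →
      (∀ z ∈ ((a, i.1) :: x).getLast?, z ∈ (marked α).matches'.lastLetters) →
      x.map Prod.fst ∈ (posNFA α).acceptsFrom {i} := by
  induction x with
  | nil =>
    intro i a hi _ hlast
    simpa using (mem_posNFA_accept_iff hi).mpr (hlast _ rfl)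
  | cons p x ih =>
    intro i a hi hchain hlast
    have hip := List.isChain_cons_cons.mp hchain
    have hp := hip.1.right_mem_letters
    rw [List.map_cons, NFA.cons_mem_acceptsFrom_singleton]
    exact ⟨⟨p.2, (letterAt_of_mem_letters_marked hp).2.1⟩, (mem_posNFA_step_iff hi).mpr hip.1,
      ih hp hip.2 fun z hz => hlast z (by rwa [List.getLast?_cons_cons])⟩

theorem exists_of_mem_acceptsFrom_posNFA (w : List σ) :
    ∀ {i : Pos0 α} {a : σ}, (a, i.1) ∈ (marked α).matches'.letters →
      w ∈ (posNFA α).acceptsFrom {i} →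
      ∃ x : List (σ × ℕ), x.map Prod.fst = w ∧
        ((a, i.1) :: x).IsChain (marked α).matches'.Follows ∧
        ∀ z ∈ ((a, i.1) :: x).getLast?, z ∈ (marked α).matches'.lastLetters := by
  induction w with
  | nil =>
    intro i a hi hw
    refine ⟨[], rfl, .singleton _, fun z hz => ?_⟩
    obtain rfl := Option.mem_some_iff.mp hz
    exact (mem_posNFA_accept_iff hi).mp (by simpa using hw)
  | cons b w ih =>
    intro i a hi hw
    obtain ⟨j, hj, hw⟩ := (NFA.cons_mem_acceptsFrom_singleton _).mp hw
    have hij := (mem_posNFA_step_iff hi).mp hj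
    obtain ⟨x, rfl, hchain, hlast⟩ := ih hij.right_mem_letters hw
    exact ⟨(b, j.1) :: x, rfl, hchain.cons_cons hij,
      fun z hz => hlast z (by rwa [List.getLast?_cons_cons] at hz)⟩

theorem posNFA_accepts (α : RegularExpression σ) : (posNFA α).accepts = α.matches' := by
  ext w
  rw [NFA.accepts_eq_acceptsFrom_start, NFA.mem_acceptsFrom_iff_exists]
  rcases w with _ | ⟨b, w⟩
  · simp only [NFA.nil_mem_acceptsFrom, Set.mem_singleton_iff, exists_eq_left]
    exact ⟨fun ⟨_, hs, h⟩ => (mem_posNFA_accept_zero_iff hs).mp h,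
      fun h => ⟨⟨0, Nat.zero_le _⟩, rfl, (mem_posNFA_accept_zero_iff rfl).mpr h⟩⟩
  simp only [NFA.cons_mem_acceptsFrom_singleton]
  rw [matches'_eq_image_marked]
  constructor
  · rintro ⟨s, hs, j, hj, hw⟩
    have hbj := (mem_posNFA_step_zero_iff hs).mp hj
    obtain ⟨x, rfl, hchain, hlast⟩ :=
      exists_of_mem_acceptsFrom_posNFA w (firstLetters_subset_letters hbj) hw
    exact ⟨_, isLocal_mark α 0 _ _ hbj hlast hchain, rfl⟩
  · rintro ⟨_ | ⟨⟨c, j⟩, x⟩, hx, hxw⟩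
    · cases hxw
    obtain ⟨rfl, rfl⟩ := List.cons_eq_cons.mp hxw
    have hfirst : (c, j) ∈ (marked α).matches'.firstLetters := ⟨x, hx⟩
    have hj := firstLetters_subset_letters hfirst
    refine ⟨⟨0, Nat.zero_le _⟩, rfl, ⟨j, (letterAt_of_mem_letters_marked hj).2.1⟩,
      (mem_posNFA_step_zero_iff rfl).mpr hfirst, ?_⟩
    exact map_fst_mem_acceptsFrom_posNFA x hj (isChain_follows_of_mem hx)
      fun z hz => mem_lastLetters_of_mem hx hz

end PositionAutomaton

theorem rightInvariant_followSetoid (α : RegularExpression σ) :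
    RightInvariant (posNFA α) (followSetoid α).r := by
  refine ⟨(followSetoid α).iseqv, fun _ _ h => h.1, fun p q a h => ?_⟩
  have hstep : (posNFA α).step p a = (posNFA α).step q a := by
    ext j
    change j.1 ∈ follow α p.1 ∧ _ ↔ j.1 ∈ follow α q.1 ∧ _
    rw [h.2]
  rw [hstep]
  exact ⟨fun r hr => ⟨r, hr, (followSetoid α).iseqv.refl r⟩,
    fun r hr => ⟨r, hr, (followSetoid α).iseqv.refl r⟩⟩

/-- The follow automaton accepts exactly `L(α)`. -/
theorem followNFA_accepts (α : RegularExpression σ) :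
    (followNFA α).accepts = α.matches' :=
  (quotNFA_accepts _ _ (rightInvariant_followSetoid α)).trans (posNFA_accepts α)
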